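/- In the Gaudin realization, the global Cartan generator acts on Bethe vectors by h_gl Ψ_M(μ) = −2(p + M) Ψ_M(μ) + 2ξ(p + M − 1) ∑_{i=1}^{M} Ψ_{M−1}(μ^(i)), where p = −(1/2)∑_{a=1}^{N} ℓ_a, Ψ_M(μ) = B_M(μ)Ω₊, and μ^(i) is the set μ with μᵢ removed. In particular, for ξ ≠ 0 and M ≥ 1 the Bethe vectors are in general not eigenvectors of h_gl. -/

import Mathlib

/-!
The global Cartan element `h = ∑ₐ hₐ` satisfies `[h, X⁻(λ)] = -2 X⁻(λ) - ξ h`. Commuting `h`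
through the ordered product `B^(k)(t) = ∏ (X⁻(tₙ) + (k+n)ξ)`, every factor contributes `-2`, while
the stray terms `-ξ h` are resummed with the shift identity
`B^(k+1)(t) = B^(k)(t) + ξ ∑ᵢ B^(k+1)(t^(i))`. This gives, in any `ℂ`-algebra,
`h B^(k)(t) = B^(k)(t) (h - 2|t|) + ξ ∑ᵢ B^(k)(t^(i)) (2(k + |t| - 1) - h)`,
and applying it to `Ω₊`, on which `h` acts by `∑ₐ ℓₐ = -2p`, gives the formula.
-/

open Finset

/-- The operators B^(k)_M(μ₁,…,μ_M) = ∏_{n=k}^{M+k−1} (X⁻(μ_{n−k+1}) + nξ),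
    as an ordered product (left to right), B^(k)_0 = 1. -/
noncomputable def Bop {A : Type*} [Ring A] [Module ℂ A]
    (Xm : ℂ → A) (ξ : ℂ) : ℕ → List ℂ → A
  | _, [] => 1
  | k, μ :: t => (Xm μ + ((k : ℂ) * ξ) • (1 : A)) * Bop Xm ξ (k + 1) t

/-- the argument tuple μ with the i-th entry removed (in increasing index order) -/
noncomputable def rmv {M : ℕ} (μ : Fin M → ℂ) (i : Fin M) : List ℂ :=
  ((Finset.univ.erase i).sort (· ≤ ·)).map μ

/-- the twisted Gaudin loop generator X⁻(λ) = ∑_a (X⁻_a/(λ−z_a) − (ξ/2)h_a) -/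
noncomputable def XmGaudin {H : Type*} [AddCommGroup H] [Module ℂ H] {N : ℕ}
    (z : Fin N → ℂ) (ξ : ℂ) (XmA hA : Fin N → Module.End ℂ H) (lam : ℂ) :
    Module.End ℂ H :=
  ∑ a, ((lam - z a)⁻¹ • XmA a - (ξ / 2) • hA a)

theorem List.ofFn_comp_succAbove {α : Type*} {n : ℕ} (f : Fin (n + 1) → α) (i : Fin (n + 1)) :
    List.ofFn (f ∘ i.succAbove) = (List.ofFn f).eraseIdx i := by
  refine List.ext_getElem ?_ fun j h₁ h₂ => ?_
  · rw [List.length_eraseIdx_of_lt (by simp [Fin.is_le]), List.length_ofFn, List.length_ofFn]; rfl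
  simp only [List.getElem_ofFn, List.getElem_eraseIdx, Function.comp_apply, Fin.succAbove]
  split_ifs <;> simp_all [Fin.lt_def]

theorem Fin.map_univ_succAboveEmb {n : ℕ} (i : Fin (n + 1)) :
    Finset.univ.map i.succAboveEmb = Finset.univ.erase i := by
  ext j; simp [Fin.exists_succAbove_eq_iff]

theorem Fin.sort_univ_erase {n : ℕ} (i : Fin (n + 1)) :
    (Finset.univ.erase i).sort (· ≤ ·) = List.ofFn i.succAbove := by
  rw [← Fin.map_univ_succAboveEmb, ← StrictMonoOn.map_finsetSort _ _
    ((Fin.strictMono_succAbove i).strictMonoOn _), Fin.sort_univ, ← List.ofFn_eq_map]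
  rfl

theorem rmv_eq_eraseIdx {n : ℕ} (μ : Fin (n + 1) → ℂ) (i : Fin (n + 1)) :
    rmv μ i = (List.ofFn μ).eraseIdx i := by
  rw [rmv, Fin.sort_univ_erase, List.map_ofFn, List.ofFn_comp_succAbove]

section Algebra

variable {A : Type*} [Ring A] [Algebra ℂ A] (Xm : ℂ → A) (ξ : ℂ)

theorem Bop_succ_eq_add_smul_sum_eraseIdx (t : List ℂ) (k : ℕ) :
    Bop Xm ξ (k + 1) t
      = Bop Xm ξ k t + ξ • ∑ i : Fin t.length, Bop Xm ξ (k + 1) (t.eraseIdx i) := by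
  induction t generalizing k with
  | nil => simp [Bop]
  | cons μ s ih =>
    change _ = _ + ξ • ∑ i : Fin (s.length + 1), _
    rw [Fin.sum_univ_succ]
    simp only [Bop, List.length_cons, Fin.val_zero, List.eraseIdx_cons_zero, Fin.val_succ,
      List.eraseIdx_cons_succ, ih (k + 1)]
    push_cast
    simp only [Finset.mul_sum, Finset.smul_sum, mul_add, add_mul, smul_mul_assoc, one_mul,
      mul_smul_comm, smul_add, Finset.sum_add_distrib]
    module

theorem mul_Bop (h : A) (hX : ∀ x, h * Xm x = Xm x * h - (2 : ℂ) • Xm x - ξ • h)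
    (t : List ℂ) (k : ℕ) :
    h * Bop Xm ξ k t = Bop Xm ξ k t * (h - (2 * t.length : ℂ) • 1)
      + ξ • ∑ i : Fin t.length,
          Bop Xm ξ k (t.eraseIdx i) * ((2 * (k + t.length - 1) : ℂ) • 1 - h) := by
  induction t generalizing k with
  | nil => simp [Bop]
  | cons μ s ih =>
    set Y := Xm μ + ((k : ℂ) * ξ) • (1 : A)
    set B := Bop Xm ξ (k + 1) s
    set c : ℂ := 2 * (k + s.length)
    set E := ∑ j : Fin s.length, Bop Xm ξ (k + 1) (s.eraseIdx j) * (c • 1 - h)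
    have hY : h * Y = Y * (h - (2 : ℂ) • 1) + ξ • ((2 * k : ℂ) • 1 - h) := by
      simp only [Y, mul_add, hX, mul_smul_comm, mul_sub, add_mul, smul_mul_assoc, one_mul, mul_one]
      module
    have hB : h * B = B * (h - (2 * s.length : ℂ) • 1) + ξ • E := by
      simp only [B, E, c, ih (k + 1)]
      push_cast
      ring_nf
    have hB₁ : (h - (2 : ℂ) • 1) * B = B * (h - (2 * (s.length + 1) : ℂ) • 1) + ξ • E := by
      simp only [sub_mul, hB, smul_mul_assoc, one_mul, mul_sub, mul_smul_comm, mul_one]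
      module
    have hB₀ : ((2 * k : ℂ) • 1 - h) * B = Bop Xm ξ k s * (c • 1 - h) := by
      have hsplit : B * (c • 1 - h) = Bop Xm ξ k s * (c • 1 - h) + ξ • E := by
        rw [show B = _ from Bop_succ_eq_add_smul_sum_eraseIdx Xm ξ s k, add_mul, smul_mul_assoc,
          Finset.sum_mul]
      calc ((2 * k : ℂ) • 1 - h) * B = B * (c • 1 - h) - ξ • E := by
            simp only [sub_mul, hB, smul_mul_assoc, one_mul, mul_sub, mul_smul_comm, mul_one, c]
            module
        _ = Bop Xm ξ k s * (c • 1 - h) := by rw [hsplit, add_sub_cancel_right]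
    have hc : (2 * ((k : ℂ) + ((s.length + 1 : ℕ) : ℂ) - 1)) = c := by push_cast; ring
    change h * (Y * B) = Y * B * (h - (2 * ((s.length + 1 : ℕ) : ℂ)) • 1)
      + ξ • ∑ i : Fin (s.length + 1), Bop Xm ξ k ((μ :: s).eraseIdx i)
          * ((2 * ((k : ℂ) + ((s.length + 1 : ℕ) : ℂ) - 1)) • 1 - h)
    rw [Fin.sum_univ_succ, hc]
    simp only [Fin.val_zero, List.eraseIdx_cons_zero, Fin.val_succ, List.eraseIdx_cons_succ, Bop]
    calc h * (Y * B) = Y * ((h - (2 : ℂ) • 1) * B) + ξ • (((2 * k : ℂ) • 1 - h) * B) := by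
          rw [← mul_assoc, hY, add_mul, mul_assoc, smul_mul_assoc]
      _ = _ := by
          rw [hB₁, hB₀, mul_add, mul_smul_comm, Finset.mul_sum]
          simp only [mul_assoc]
          push_cast
          module

end Algebra

theorem apply_Bop_apply_of_apply_eq_smul {H : Type*} [AddCommGroup H] [Module ℂ H]
    (Xm : ℂ → Module.End ℂ H) (ξ : ℂ) (h : Module.End ℂ H)
    (hX : ∀ x, h * Xm x = Xm x * h - (2 : ℂ) • Xm x - ξ • h)
    {Ω : H} {L : ℂ} (hΩ : h Ω = L • Ω) (t : List ℂ) (k : ℕ) :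
    h (Bop Xm ξ k t Ω) = (L - 2 * t.length) • Bop Xm ξ k t Ω
      + (ξ * (2 * (k + t.length - 1) - L)) • ∑ i : Fin t.length, Bop Xm ξ k (t.eraseIdx i) Ω := by
  have h' := congrArg (· Ω) (mul_Bop Xm ξ h hX t k)
  simp only [Module.End.mul_apply, LinearMap.add_apply, LinearMap.smul_apply,
    LinearMap.sum_apply, LinearMap.sub_apply, Module.End.one_apply, map_sub, map_smul, hΩ] at h'
  rw [h']
  simp only [← sub_smul, ← Finset.smul_sum, smul_smul]

theorem sum_hA_mul_XmGaudin {H : Type*} [AddCommGroup H] [Module ℂ H] {N : ℕ}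
    (z : Fin N → ℂ) (ξ : ℂ) (hA XmA : Fin N → Module.End ℂ H)
    (hhXm : ∀ a b, hA a * XmA b - XmA b * hA a = if a = b then (-2 : ℂ) • XmA a else 0)
    (x : ℂ) :
    (∑ a, hA a) * XmGaudin z ξ XmA hA x
      = XmGaudin z ξ XmA hA x * (∑ a, hA a) - (2 : ℂ) • XmGaudin z ξ XmA hA x
        - ξ • ∑ a, hA a := by
  set S := ∑ a, hA a
  have hXmA (b : Fin N) : S * XmA b = XmA b * S - (2 : ℂ) • XmA b := by
    have hcomm : S * XmA b - XmA b * S = (-2 : ℂ) • XmA b := by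
      rw [Finset.sum_mul, Finset.mul_sum, ← Finset.sum_sub_distrib,
        Finset.sum_congr rfl fun a _ => hhXm a b]
      simp
    rw [← sub_eq_zero, ← sub_add, hcomm]
    module
  have hS : S * ∑ b, (x - z b)⁻¹ • XmA b
      = (∑ b, (x - z b)⁻¹ • XmA b) * S - (2 : ℂ) • ∑ b, (x - z b)⁻¹ • XmA b := by
    simp only [Finset.mul_sum, Finset.sum_mul, mul_smul_comm, smul_mul_assoc, hXmA, smul_sub,
      Finset.sum_sub_distrib, Finset.smul_sum, smul_comm (2 : ℂ)]
  have hX : XmGaudin z ξ XmA hA x = ∑ b, (x - z b)⁻¹ • XmA b - (ξ / 2) • S := by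
    rw [XmGaudin, Finset.sum_sub_distrib, Finset.smul_sum]
  rw [hX, mul_sub, sub_mul, hS, mul_smul_comm, smul_mul_assoc]
  module

theorem h_global_on_Bethe_vector_general
    {H : Type*} [AddCommGroup H] [Module ℂ H]
    (N : ℕ) (z ℓ : Fin N → ℂ) (ξ : ℂ)
    (hA XmA : Fin N → Module.End ℂ H)
    (hhXm : ∀ a b, hA a * XmA b - XmA b * hA a = if a = b then (-2 : ℂ) • XmA a else 0)
    (Ω : H) (hΩh : ∀ a, hA a Ω = ℓ a • Ω)
    (M : ℕ) (μ : Fin (M + 1) → ℂ) :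
    (∑ a, hA a) (Bop (XmGaudin z ξ XmA hA) ξ 0 (List.ofFn μ) Ω) =
      (-2 * ((-(1 / 2) * ∑ a, ℓ a) + ((M : ℂ) + 1))) •
          Bop (XmGaudin z ξ XmA hA) ξ 0 (List.ofFn μ) Ω
        + (2 * ξ * ((-(1 / 2) * ∑ a, ℓ a) + (M : ℂ))) •
            ∑ i, Bop (XmGaudin z ξ XmA hA) ξ 0 (rmv μ i) Ω := by
  have hΩ : (∑ a, hA a) Ω = (∑ a, ℓ a) • Ω := by
    simp [LinearMap.sum_apply, hΩh, Finset.sum_smul]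
  rw [apply_Bop_apply_of_apply_eq_smul _ ξ _ (sum_hA_mul_XmGaudin z ξ hA XmA hhXm) hΩ,
    ← Fin.sum_congr' _ (List.length_ofFn (f := μ)).symm]
  simp only [rmv_eq_eraseIdx, Fin.val_cast, List.length_ofFn]
  push_cast
  module

/-- h_gl Ψ_M(μ) = −2(p+M) Ψ_M(μ) + 2ξ(p+M−1) ∑_i Ψ_{M−1}(μ^(i)),
    with p = −(1/2)∑_a ℓ_a. -/
theorem h_global_on_Bethe_vector
    {H : Type*} [AddCommGroup H] [Module ℂ H]
    (N : ℕ) (z ℓ : Fin N → ℂ) (hz : Function.Injective z) (ξ : ℂ)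
    (hA XpA XmA : Fin N → Module.End ℂ H)
    (hhh : ∀ a b, hA a * hA b = hA b * hA a)
    (hhXp : ∀ a b, hA a * XpA b - XpA b * hA a = if a = b then (2 : ℂ) • XpA a else 0)
    (hhXm : ∀ a b, hA a * XmA b - XmA b * hA a = if a = b then (-2 : ℂ) • XmA a else 0)
    (hXpXm : ∀ a b, XpA a * XmA b - XmA b * XpA a = if a = b then hA a else 0)
    (hXpXp : ∀ a b, XpA a * XpA b = XpA b * XpA a)
    (hXmXm : ∀ a b, XmA a * XmA b = XmA b * XmA a)
    (Ω : H) (hΩp : ∀ a, XpA a Ω = 0) (hΩh : ∀ a, hA a Ω = ℓ a • Ω)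
    (M : ℕ) (μ : Fin (M + 1) → ℂ) (hμ : Function.Injective μ)
    (hdisj : ∀ i a, μ i ≠ z a) :
    (∑ a, hA a) (Bop (XmGaudin z ξ XmA hA) ξ 0 (List.ofFn μ) Ω) =
      (-2 * ((-(1 / 2) * ∑ a, ℓ a) + ((M : ℂ) + 1))) •
          Bop (XmGaudin z ξ XmA hA) ξ 0 (List.ofFn μ) Ω
        + (2 * ξ * ((-(1 / 2) * ∑ a, ℓ a) + (M : ℂ))) •
            ∑ i, Bop (XmGaudin z ξ XmA hA) ξ 0 (rmv μ i) Ω :=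
  h_global_on_Bethe_vector_general N z ℓ ξ hA XmA hhXm Ω hΩh M μ
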